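/- For all z ∈ ℂ and u ∈ ℝ, the convolution of the normalized Gaussian ψ_0 with the Segal-Bargmann kernel A_z satisfies (ψ_0 * A_z)(u) = e^{zu/√2 - u²/4}. -/
import Mathlib


open MeasureTheory Real Complex

/-- Normalized Gaussian ground state `ψ₀(x) = π^{-1/4} e^{-x²/2}`. -/
noncomputable def psi0 (x : ℝ) : ℝ := (π : ℝ) ^ (-(1 : ℝ) / 4) * Real.exp (-x ^ 2 / 2)

/-- Segal–Bargmann kernel `A_z(x) = π^{-1/4} e^{-(x²+z²)/2 + √2 z x}`. -/
noncomputable def SBkernel (z : ℂ) (x : ℝ) : ℂ :=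
  ((π : ℝ) ^ (-(1 : ℝ) / 4) : ℝ) *
    Complex.exp (-((x : ℂ) ^ 2 + z ^ 2) / 2 + (Real.sqrt 2 : ℂ) * z * (x : ℂ))

/-- `(ψ₀ * A_z)(u) = e^{zu/√2 - u²/4}`. -/
theorem psi0_conv_SBkernel (z : ℂ) (u : ℝ) :
    (∫ x : ℝ, (psi0 (u - x) : ℂ) * SBkernel z x)
      = Complex.exp (z * (u : ℂ) / (Real.sqrt 2 : ℂ) - (u : ℂ) ^ 2 / 4) := by
  have h2 : ((Real.sqrt 2 : ℂ)) * (Real.sqrt 2 : ℂ) = 2 := by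
    rw [← Complex.ofReal_mul, Real.mul_self_sqrt (by norm_num)]
    norm_num
  have hs : (Real.sqrt 2 : ℂ) ≠ 0 := by
    simpa using Real.sqrt_ne_zero'.2 (by norm_num : (0:ℝ) < 2)
  have key : ∀ x : ℝ, (psi0 (u - x) : ℂ) * SBkernel z x
      = (Complex.ofReal ((π : ℝ) ^ (-(1 : ℝ) / 2))) *
        Complex.exp ((-1) * (x:ℂ) ^ 2 + ((u:ℂ) + (Real.sqrt 2 : ℂ) * z) * (x:ℂ)
          + (-(u:ℂ)^2/2 - z^2/2)) := by
    intro x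
    simp only [psi0, SBkernel, Complex.ofReal_mul, Complex.ofReal_exp]
    have : (Complex.ofReal ((π : ℝ) ^ (-(1 : ℝ) / 4))) * (Complex.ofReal ((π : ℝ) ^ (-(1 : ℝ) / 4)))
        = (Complex.ofReal ((π : ℝ) ^ (-(1 : ℝ) / 2))) := by
      rw [← Complex.ofReal_mul, ← Real.rpow_add Real.pi_pos]
      norm_num
    rw [mul_mul_mul_comm, this, ← Complex.exp_add]
    congr 1
    push_cast
    ring
  simp_rw [key]
  rw [MeasureTheory.integral_const_mul,
    integral_cexp_quadratic (by norm_num : ((-1:ℂ)).re < 0)]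
  have hpow : (Complex.ofReal ((π : ℝ) ^ (-(1 : ℝ) / 2))) * ((π : ℂ) / -(-1)) ^ (1 / 2 : ℂ) = 1 := by
    rw [neg_neg, div_one,
      show ((1:ℂ)/2) = (((1:ℝ)/2 : ℝ) : ℂ) by norm_num,
      ← Complex.ofReal_cpow Real.pi_pos.le,
      ← Complex.ofReal_mul, ← Real.rpow_add Real.pi_pos]
    norm_num
  rw [← mul_assoc, hpow, one_mul]
  congr 1
  field_simp
  ring_nf
  rw [show ((Real.sqrt 2 : ℂ))^3 = 2 * (Real.sqrt 2:ℂ) by rw [pow_succ, sq, h2],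
    show ((Real.sqrt 2 : ℂ))^2 = 2 by rw [sq, h2]]
  ring
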